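/- The inverse of the operator G defined by G(x) = K(x) + N_D(x) satisfies G⁻¹(u₁,…,u_{m−1}) = {(a,…,a) ∈ H^{m−1} : a ∈ A_m⁻¹(∑ᵢ uᵢ)} for all (u₁,…,u_{m−1}) ∈ H^{m−1}. -/
import Mathlib


open Pointwise

theorem stmt10 {H : Type*} [AddCommGroup H] [Module ℝ H]
    (m : ℕ) (hm : 2 ≤ m) (Am : H → Set H) (u : Fin (m - 1) → H) :
    {x : Fin (m - 1) → H |
        u ∈ ({k : Fin (m - 1) → H |
                (∀ i j, x i = x j) ∧
                  ∃ v ∈ Am (x ⟨0, by omega⟩), ∀ i, k i = ((m : ℝ) - 1)⁻¹ • v}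
              + {w : Fin (m - 1) → H | (∀ i j, x i = x j) ∧ ∑ i, w i = 0})}
      = {x : Fin (m - 1) → H | ∃ a : H, (∀ i, x i = a) ∧ (∑ i, u i) ∈ Am a} := by
  have hm1 : ((m : ℝ) - 1) ≠ 0 := by
    have : (2 : ℝ) ≤ (m : ℝ) := by exact_mod_cast hm
    linarith
  have hcard : ((m - 1 : ℕ) : ℝ) = (m : ℝ) - 1 := by
    have h1 : 1 ≤ m := by omega
    push_cast [Nat.cast_sub h1]
    ring
  have hsumconst : ∀ v : H, ∑ _i : Fin (m - 1), ((m : ℝ) - 1)⁻¹ • v = v := by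
    intro v
    rw [Finset.sum_const, Finset.card_univ, Fintype.card_fin,
      ← Nat.cast_smul_eq_nsmul ℝ, hcard, smul_smul, mul_inv_cancel₀ hm1, one_smul]
  ext x
  simp only [Set.mem_setOf_eq, Set.mem_add]
  constructor
  · rintro ⟨k, ⟨hx, v, hv, hk⟩, w, ⟨-, hw⟩, huv⟩
    refine ⟨x ⟨0, by omega⟩, fun i => hx i _, ?_⟩
    have hsum : ∑ i, u i = v := by
      rw [← huv]
      have : ∑ i, (k + w) i = (∑ i, k i) + ∑ i, w i := Finset.sum_add_distrib
      rw [this, hw, add_zero]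
      calc ∑ i, k i = ∑ _i : Fin (m - 1), ((m : ℝ) - 1)⁻¹ • v := by
            exact Finset.sum_congr rfl fun i _ => hk i
        _ = v := hsumconst v
    rwa [hsum]
  · rintro ⟨a, hx, hA⟩
    have hxx : ∀ i j, x i = x j := fun i j => (hx i).trans (hx j).symm
    refine ⟨fun _ => ((m : ℝ) - 1)⁻¹ • (∑ i, u i),
      ⟨hxx, ∑ i, u i, by rwa [hx], fun i => rfl⟩,
      u - fun _ => ((m : ℝ) - 1)⁻¹ • (∑ i, u i),
      ⟨hxx, ?_⟩, by funext i; simp⟩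
    simp only [Pi.sub_apply, Finset.sum_sub_distrib]
    rw [hsumconst, sub_self]
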